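/- arXiv:1611.09157 — 3 statements merged into one kernel-verified Lean document; each statement's English description precedes it below -/
import Mathlib

section
/- Let a > 0, α < 1, η ∈ ℂ with Re(η) > 0, and β ∈ ℂ with Re(β) > 0 and Re(η/(1−α)) > −1. Then for x > 0 the pathway fractional integral of the power function t^{β−1} satisfies (P^{(η,α)}_{0+}[t^{β−1}])(x) = x^{η+β} / (a(1−α))^β · Γ(β) Γ(1 + η/(1−α)) / Γ(1 + η/(1−α) + β). -/
/-!
With `c = x / (a (1 - α))` the kernel is `(1 - t / c) ^ (η / (1 - α))`, so the substitution
`t = c s` turns the integral into `c ^ β` times Euler's Beta integral `B(β, 1 + η / (1 - α))`,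
which equals `Γ(β) Γ(1 + η / (1 - α)) / Γ(1 + η / (1 - α) + β)`.
-/

open Complex Real

/-- The k-gamma function: `Γ_k(γ) = k^(γ/k - 1) Γ(γ/k)`. -/
noncomputable def kGamma (k : ℝ) (γ : ℂ) : ℂ :=
  (k : ℂ) ^ (γ / (k : ℂ) - 1) * Complex.Gamma (γ / (k : ℂ))

/-- The k-Struve function `S^k_{ν,c}(x)`. -/
noncomputable def kStruve (k : ℝ) (ν c : ℂ) (x : ℝ) : ℂ :=
  ∑' r : ℕ, (-c) ^ r /
      (kGamma k ((r : ℂ) * (k : ℂ) + ν + 3 * (k : ℂ) / 2) * Complex.Gamma ((r : ℂ) + 3 / 2)) *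
    ((x : ℂ) / 2) ^ (2 * (r : ℂ) + ν / (k : ℂ) + 1)

/-- The pathway fractional integral operator `P^{(η,α)}_{0+}`. -/
noncomputable def pathway (a α : ℝ) (η : ℂ) (f : ℝ → ℂ) (x : ℝ) : ℂ :=
  (x : ℂ) ^ η *
    ∫ t in (0 : ℝ)..(x / (a * (1 - α))),
      ((1 - a * (1 - α) * t / x : ℝ) : ℂ) ^ (η / (1 - (α : ℂ))) * f t

/-- The generalized (Fox–)Wright function `_pΨ_q`. -/
noncomputable def foxWright {p q : ℕ} (a : Fin p → ℂ × ℂ) (b : Fin q → ℂ × ℂ) (z : ℂ) : ℂ :=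
  ∑' n : ℕ,
    ((∏ i, Complex.Gamma ((a i).1 + (a i).2 * (n : ℂ))) /
      (∏ j, Complex.Gamma ((b j).1 + (b j).2 * (n : ℂ)))) * z ^ n / (n.factorial : ℂ)

theorem integral_one_sub_div_cpow_mul_cpow {c : ℝ} (hc : 0 < c) (μ β : ℂ) :
    ∫ t in (0 : ℝ)..c, ((1 - t / c : ℝ) : ℂ) ^ μ * (t : ℂ) ^ (β - 1) =
      (c : ℂ) ^ β * betaIntegral β (μ + 1) := by
  have hc₀ : (c : ℂ) ≠ 0 := ofReal_ne_zero.mpr hc.ne'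
  have scale : ∀ s ∈ Set.uIcc (0 : ℝ) 1,
      ((1 - c * s / c : ℝ) : ℂ) ^ μ * ((c * s : ℝ) : ℂ) ^ (β - 1) =
        (c : ℂ) ^ (β - 1) * ((s : ℂ) ^ (β - 1) * (1 - (s : ℂ)) ^ (μ + 1 - 1)) := by
    intro s hs
    rw [Set.uIcc_of_le zero_le_one] at hs
    rw [mul_div_cancel_left₀ s hc.ne', ofReal_mul, mul_cpow_ofReal_nonneg hc.le hs.1,
      add_sub_cancel_right]
    push_cast
    ring
  calc ∫ t in (0 : ℝ)..c, ((1 - t / c : ℝ) : ℂ) ^ μ * (t : ℂ) ^ (β - 1)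
      = c • ∫ s in (0 : ℝ)..1, ((1 - c * s / c : ℝ) : ℂ) ^ μ * ((c * s : ℝ) : ℂ) ^ (β - 1) := by
        simpa only [mul_zero, mul_one] using (intervalIntegral.smul_integral_comp_mul_left
          (fun t : ℝ => ((1 - t / c : ℝ) : ℂ) ^ μ * (t : ℂ) ^ (β - 1)) (a := 0) (b := 1) c).symm
    _ = (c : ℂ) * ((c : ℂ) ^ (β - 1) * betaIntegral β (μ + 1)) := by
        rw [intervalIntegral.integral_congr scale, intervalIntegral.integral_const_mul,
          real_smul]
        rfl
    _ = (c : ℂ) ^ β * betaIntegral β (μ + 1) := by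
        rw [cpow_sub _ _ hc₀, cpow_one, ← mul_assoc, mul_div_cancel₀ _ hc₀]

theorem pathway_eq_mul_integral_one_sub_div (a α : ℝ) (η : ℂ) (f : ℝ → ℂ) (x : ℝ) :
    pathway a α η f x = (x : ℂ) ^ η *
      ∫ t in (0 : ℝ)..(x / (a * (1 - α))),
        ((1 - t / (x / (a * (1 - α))) : ℝ) : ℂ) ^ (η / (1 - (α : ℂ))) * f t := by
  simp only [pathway, div_div_eq_mul_div, mul_comm _ (a * (1 - α))]

theorem pathway_power_general (a α : ℝ) (η β : ℂ) (ha : 0 < a) (hα : α < 1)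
    (hβ : 0 < β.re) (hηα : -1 < (η / (1 - (α : ℂ))).re)
    (x : ℝ) (hx : 0 < x) :
    pathway a α η (fun t => (t : ℂ) ^ (β - 1)) x =
      (x : ℂ) ^ (η + β) / ((a * (1 - α) : ℝ) : ℂ) ^ β *
        (Complex.Gamma β * Complex.Gamma (1 + η / (1 - (α : ℂ))) /
          Complex.Gamma (1 + η / (1 - (α : ℂ)) + β)) := by
  have hd : 0 < a * (1 - α) := mul_pos ha (sub_pos.mpr hα)
  have hμ : 0 < (η / (1 - (α : ℂ)) + 1).re := by
    rw [add_re, one_re]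
    linarith
  rw [pathway_eq_mul_integral_one_sub_div, integral_one_sub_div_cpow_mul_cpow (div_pos hx hd),
    betaIntegral_eq_Gamma_mul_div _ _ hβ hμ, ofReal_div, div_cpow_ofReal_nonneg hx.le hd.le,
    cpow_add _ _ (ofReal_ne_zero.mpr hx.ne'), add_comm _ (1 : ℂ), add_comm β]
  ring

theorem pathway_power (a α : ℝ) (η β : ℂ) (ha : 0 < a) (hα : α < 1)
    (hη : 0 < η.re) (hβ : 0 < β.re) (hηα : -1 < (η / (1 - (α : ℂ))).re)
    (x : ℝ) (hx : 0 < x) :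
    pathway a α η (fun t => (t : ℂ) ^ (β - 1)) x =
      (x : ℂ) ^ (η + β) / ((a * (1 - α) : ℝ) : ℂ) ^ β *
        (Complex.Gamma β * Complex.Gamma (1 + η / (1 - (α : ℂ))) /
          Complex.Gamma (1 + η / (1 - (α : ℂ)) + β)) :=
  pathway_power_general a α η β ha hα hβ hηα x hx
end

section
/- Let k > 0 and α ∈ ℝ. Then for all x > 0, sin(αx/√k) = α √(πx/(2k)) · S^k_{−k/2, α²}(x). -/
open Complex Real

/-!
At `ν = -k/2` the k-gamma factor of the `r`-th term is `k ^ r * r!`, and Legendre's duplication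
formula gives `r! * Γ(r + 3/2) = (2r+1)! √π / 2^(2r+1)`. The k-Struve series therefore collapses to
`2 √(x/2) / √π` times the Taylor series of `sin z / z` at `z = α x / √k`.
-/

open scoped Nat

theorem kGamma_nat_add_one_mul {k : ℝ} (hk : k ≠ 0) (r : ℕ) :
    kGamma k ((r + 1) * k) = (k : ℂ) ^ r * r ! := by
  rw [kGamma, mul_div_cancel_right₀ _ (ofReal_ne_zero.mpr hk), add_sub_cancel_right,
    cpow_natCast, Complex.Gamma_nat_eq_factorial]

theorem Complex.factorial_mul_Gamma_nat_add_three_halves (r : ℕ) :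
    (r ! : ℂ) * Gamma (r + 3 / 2) = (2 * r + 1)! * √π / 2 ^ (2 * r + 1) := by
  rw [← Gamma_nat_eq_factorial, show (r : ℂ) + 3 / 2 = r + 1 + 1 / 2 by ring,
    Gamma_mul_Gamma_add_half,
    show 2 * ((r : ℂ) + 1) = ((2 * r + 1 : ℕ) : ℂ) + 1 by push_cast; ring, Gamma_nat_eq_factorial,
    show (1 : ℂ) - ((2 * r + 1 : ℕ) + 1) = -((2 * r + 1 : ℕ) : ℂ) by ring, cpow_neg, cpow_natCast]
  ring

theorem Complex.sin_eq_mul_tsum (z : ℂ) :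
    sin z = z * ∑' n : ℕ, (-z ^ 2) ^ n / (2 * n + 1)! := by
  rw [sin_eq_tsum, ← tsum_mul_left]
  congr 1 with n
  rw [neg_pow, pow_succ, pow_mul]
  ring

theorem kStruve_neg_half {k : ℝ} (hk : k ≠ 0) (c : ℂ) {x : ℝ} (hx : 0 < x) :
    kStruve k (-((k : ℂ) / 2)) c x =
      2 * √(x / 2) / √π * ∑' r : ℕ, (-(c * x ^ 2 / k)) ^ r / (2 * r + 1)! := by
  have hk' : (k : ℂ) ≠ 0 := ofReal_ne_zero.mpr hk
  have hx2 : (x : ℂ) / 2 ≠ 0 := div_ne_zero (ofReal_ne_zero.mpr hx.ne') two_ne_zero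
  have hsqrt : ((x : ℂ) / 2) ^ (1 / 2 : ℂ) = √(x / 2) := by
    rw [Real.sqrt_eq_rpow, ofReal_cpow (by positivity)]
    push_cast
    rfl
  rw [kStruve, ← tsum_mul_left]
  congr 1 with r
  have hexp : 2 * (r : ℂ) + -((k : ℂ) / 2) / k + 1 = ((2 * r : ℕ) : ℂ) + 1 / 2 := by
    push_cast
    field_simp
    ring
  rw [show (r : ℂ) * k + -((k : ℂ) / 2) + 3 * k / 2 = (r + 1) * k by ring,
    kGamma_nat_add_one_mul hk, hexp, cpow_add _ _ hx2, cpow_natCast, hsqrt,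
    mul_assoc, factorial_mul_Gamma_nat_add_three_halves,
    show (-(c * x ^ 2 / k)) ^ r = (-c) ^ r * x ^ (2 * r) / k ^ r by ring, div_pow]
  field_simp
  ring

theorem sin_eq_kStruve (k : ℝ) (hk : 0 < k) (α : ℝ) (x : ℝ) (hx : 0 < x) :
    ((Real.sin (α * x / Real.sqrt k) : ℝ) : ℂ) =
      (α : ℂ) * ((Real.sqrt (π * x / (2 * k)) : ℝ) : ℂ) *
        kStruve k (-((k : ℂ) / 2)) ((α : ℂ) ^ 2) x := by
  have hprefactor : √(π * x / (2 * k)) * (2 * √(x / 2) / √π) = x / √k := by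
    rw [Real.sqrt_div' _ (by positivity : (0 : ℝ) ≤ 2 * k), Real.sqrt_mul Real.pi_pos.le,
      Real.sqrt_mul zero_le_two, Real.sqrt_div' _ zero_le_two]
    field_simp
    rw [Real.sq_sqrt hx.le, Real.sq_sqrt zero_le_two]
    ring
  have hsq : ((α * x / √k : ℝ) : ℂ) ^ 2 = α ^ 2 * x ^ 2 / k := by
    push_cast
    rw [div_pow, ← ofReal_pow, Real.sq_sqrt hk.le]
    ring
  rw [kStruve_neg_half hk.ne' _ hx, ofReal_sin, sin_eq_mul_tsum, hsq, mul_div_assoc,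
    ← hprefactor]
  push_cast
  ring
end

section
/- Let k > 0 and α ∈ ℝ. Then for all x > 0, sinh(αx/√k) = α √(πx/(2k)) · S^k_{−k/2, −α²}(x). -/
/-!
For `ν = -k/2` the `k`-gamma factor of the `r`-th term is `Γ_k((r+1)k) = k^r r!`, and
`Γ(r + 3/2) = (2r+1)! √π / (2^(2r+1) r!)` because `(2r+1)! = (2r+1)‼ · 2^r r!`. The `r`-th term of
`√(πx/(2k)) · S^k_{-k/2,c}(x)` is then `(x/√k) (-c x²/k)^r / (2r+1)!`; for `c = -α²`, multiplied
by `α`, this is the `r`-th term `z^(2r+1)/(2r+1)!` of the Taylor series of `sinh z` at `z = αx/√k`.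
-/

open Complex Real

open scoped Nat

theorem kGamma_natCast_add_one_mul {k : ℝ} (hk : k ≠ 0) (n : ℕ) :
    kGamma k ((n + 1) * k) = k ^ n * n ! := by
  have hk' : (k : ℂ) ≠ 0 := ofReal_ne_zero.mpr hk
  rw [kGamma, mul_div_cancel_right₀ _ hk', add_sub_cancel_right, cpow_natCast,
    Complex.Gamma_nat_eq_factorial]

theorem Complex.Gamma_natCast_add_three_halves (n : ℕ) :
    Gamma (n + 3 / 2) = (2 * n + 1)! * √π / (2 ^ (2 * n + 1) * n !) := by
  have hfac : ((2 * n + 1)! : ℝ) = (2 * n + 1 : ℕ)‼ * (2 ^ n * n !) := by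
    rw [Nat.factorial_eq_mul_doubleFactorial, Nat.doubleFactorial_two_mul]
    push_cast
    ring
  rw [show (n : ℂ) + 3 / 2 = ((n + 1 + 1 / 2 : ℝ) : ℂ) by push_cast; ring, Gamma_ofReal,
    Real.Gamma_nat_add_one_add_half, show ((2 * n + 1)! : ℂ) = (((2 * n + 1)! : ℝ) : ℂ) by
      norm_cast, hfac]
  have hn : (n ! : ℂ) ≠ 0 := Nat.cast_ne_zero.mpr n.factorial_ne_zero
  push_cast
  field_simp
  ring

theorem Complex.ofReal_cpow_natCast_add_half {y : ℝ} (hy : 0 < y) (n : ℕ) :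
    (y : ℂ) ^ ((n : ℂ) + 1 / 2) = y ^ n * √y := by
  rw [cpow_add _ _ (ofReal_ne_zero.mpr hy.ne'), cpow_natCast, Real.sqrt_eq_rpow,
    ofReal_cpow hy.le]
  push_cast
  rfl

theorem kStruve_neg_half_eq {k x : ℝ} (hk : 0 < k) (hx : 0 < x) (c : ℂ) :
    kStruve k (-(k / 2)) c x =
      2 * √(x / 2) / √π * ∑' r : ℕ, (-c * x ^ 2 / k) ^ r / (2 * r + 1)! := by
  have hk' : (k : ℂ) ≠ 0 := ofReal_ne_zero.mpr hk.ne'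
  rw [kStruve, ← tsum_mul_left]
  refine tsum_congr fun r => ?_
  rw [show (r : ℂ) * k + -(k / 2) + 3 * k / 2 = (r + 1) * k by ring,
    kGamma_natCast_add_one_mul hk.ne', Gamma_natCast_add_three_halves,
    show 2 * (r : ℂ) + -(k / 2) / k + 1 = ((2 * r : ℕ) : ℂ) + 1 / 2 by push_cast; field_simp; ring,
    show (x : ℂ) / 2 = ((x / 2 : ℝ) : ℂ) by push_cast; rfl,
    ofReal_cpow_natCast_add_half (by positivity)]
  have hπ : ((√π : ℝ) : ℂ) ≠ 0 := ofReal_ne_zero.mpr (Real.sqrt_pos.mpr pi_pos).ne'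
  have hr : (r ! : ℂ) ≠ 0 := Nat.cast_ne_zero.mpr r.factorial_ne_zero
  have h2r : ((2 * r + 1)! : ℂ) ≠ 0 := Nat.cast_ne_zero.mpr (2 * r + 1).factorial_ne_zero
  push_cast
  simp only [div_pow, mul_pow]
  field_simp
  ring

theorem sqrt_mul_kStruve_neg_half_eq {k x : ℝ} (hk : 0 < k) (hx : 0 < x) (c : ℂ) :
    √(π * x / (2 * k)) * kStruve k (-(k / 2)) c x =
      x / √k * ∑' r : ℕ, (-c * x ^ 2 / k) ^ r / (2 * r + 1)! := by
  have hcoef : √(π * x / (2 * k)) * (2 * √(x / 2) / √π) = x / √k := by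
    have hprod : √(π * x / (2 * k)) * √(x / 2) = x / 2 * (√π / √k) := by
      rw [← Real.sqrt_mul (by positivity),
        show π * x / (2 * k) * (x / 2) = (x / 2) ^ 2 * (π / k) by ring,
        Real.sqrt_mul (by positivity), Real.sqrt_sq (by positivity), Real.sqrt_div pi_pos.le]
    have hπ : √π ≠ 0 := (Real.sqrt_pos.mpr pi_pos).ne'
    rw [mul_div_assoc', mul_left_comm, hprod]
    field_simp
  rw [kStruve_neg_half_eq hk hx, ← mul_assoc]
  exact_mod_cast congrArg (fun a : ℝ => (a : ℂ) * _) hcoef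

theorem Complex.sinh_eq_mul_tsum (z : ℂ) :
    sinh z = z * ∑' r : ℕ, (z ^ 2) ^ r / (2 * r + 1)! := by
  rw [sinh_eq_tsum, ← tsum_mul_left]
  refine tsum_congr fun r => ?_
  rw [pow_succ, pow_mul]
  ring

theorem sinh_eq_kStruve (k : ℝ) (hk : 0 < k) (α : ℝ) (x : ℝ) (hx : 0 < x) :
    ((Real.sinh (α * x / Real.sqrt k) : ℝ) : ℂ) =
      (α : ℂ) * ((Real.sqrt (π * x / (2 * k)) : ℝ) : ℂ) *
        kStruve k (-((k : ℂ) / 2)) (-(α : ℂ) ^ 2) x := by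
  have hsq : ((α * x / √k : ℝ) : ℂ) ^ 2 = - -(α : ℂ) ^ 2 * x ^ 2 / k := by
    push_cast
    rw [div_pow, ← ofReal_pow, Real.sq_sqrt hk.le]
    ring
  rw [ofReal_sinh, sinh_eq_mul_tsum, hsq, mul_assoc, sqrt_mul_kStruve_neg_half_eq hk hx]
  push_cast
  ring
end
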